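/- Let $X$ be a type with an involution $\tau : X \to X$ (so $\tau \circ \tau = \mathrm{id}$), and let $f : X \to \mathbb{N}$ be a finitely supported function. Then there exist finitely supported functions $d_1, d_2, n : X \to \mathbb{N}$ such that: (1) $f(x) = d_1(x) + 2 d_2(x) + n(x) + n(\tau x)$ for all $x$; (2) $d_1(x) \le 1$ for all $x$; (3) if $\tau x = x$ then $d_2(x) = 0$; (4) if $\tau x \ne x$ then $d_1(x) + d_2(x)$ and $d_1(\tau x) + d_2(\tau x)$ are not both positive. -/

import Mathlib

theorem stmt_9 (X : Type*) (τ : X → X) (hτ : ∀ x, τ (τ x) = x) (f : X →₀ ℕ) :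
    ∃ d₁ d₂ n : X →₀ ℕ,
      (∀ x, f x = d₁ x + 2 * d₂ x + n x + n (τ x)) ∧
      (∀ x, d₁ x ≤ 1) ∧
      (∀ x, τ x = x → d₂ x = 0) ∧
      (∀ x, τ x ≠ x → ¬(0 < d₁ x + d₂ x ∧ 0 < d₁ (τ x) + d₂ (τ x))) := by
  classical
  letI : LinearOrder X := IsWellOrder.linearOrder WellOrderingRel
  set D1 : X → ℕ := fun x =>
    if τ x = x then f x % 2 else if f (τ x) < f x then (f x - f (τ x)) % 2 else 0 with hD1
  set D2 : X → ℕ := fun x =>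
    if τ x = x then 0 else if f (τ x) < f x then (f x - f (τ x)) / 2 else 0 with hD2
  set N : X → ℕ := fun x =>
    if τ x = x then f x / 2
    else if f x < f (τ x) ∨ (f x = f (τ x) ∧ x < τ x) then min (f x) (f (τ x)) else 0 with hN
  have supp1 : ∀ x, D1 x ≠ 0 → x ∈ f.support := by
    intro x h
    simp only [hD1] at h
    simp only [Finsupp.mem_support_iff]
    split_ifs at h with h1 h2 <;> omega
  have supp2 : ∀ x, D2 x ≠ 0 → x ∈ f.support := by
    intro x h
    simp only [hD2] at h
    simp only [Finsupp.mem_support_iff]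
    split_ifs at h with h1 h2 <;> omega
  have suppN : ∀ x, N x ≠ 0 → x ∈ f.support := by
    intro x h
    simp only [hN] at h
    simp only [Finsupp.mem_support_iff]
    split_ifs at h with h1 h2 <;> omega
  refine ⟨Finsupp.onFinset f.support D1 supp1, Finsupp.onFinset f.support D2 supp2,
    Finsupp.onFinset f.support N suppN, ?_, ?_, ?_, ?_⟩
  · intro x
    simp only [Finsupp.onFinset_apply, hD1, hD2, hN]
    by_cases h : τ x = x
    · simp only [h, lt_self_iff_false, if_true, if_false]
      omega
    · have hx2 : ¬ (x = τ x) := fun e => h e.symm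
      simp only [if_neg h, hτ, if_neg hx2]
      rcases lt_trichotomy (f x) (f (τ x)) with hlt | heq | hgt
      · have h1 : (f x < f (τ x) ∨ (f x = f (τ x) ∧ x < τ x)) := Or.inl hlt
        have h2 : ¬(f (τ x) < f x ∨ (f (τ x) = f x ∧ τ x < x)) := by
          rintro (h2 | ⟨h2, _⟩) <;> omega
        simp only [if_pos h1, if_neg h2, if_neg (not_lt.mpr hlt.le),
          if_pos hlt]
        omega
      · have hne : x ≠ τ x := fun e => h e.symm
        rcases lt_or_gt_of_ne hne with hx | hx
        · have h1 : (f x < f (τ x) ∨ (f x = f (τ x) ∧ x < τ x)) := Or.inr ⟨heq, hx⟩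
          have h2 : ¬(f (τ x) < f x ∨ (f (τ x) = f x ∧ τ x < x)) := by
            rintro (h2 | ⟨_, h2⟩)
            · omega
            · exact absurd hx (not_lt.mpr h2.le)
          simp only [if_pos h1, if_neg h2, if_neg (not_lt.mpr heq.le),
            if_neg (not_lt.mpr heq.ge)]
          omega
        · have h1 : ¬(f x < f (τ x) ∨ (f x = f (τ x) ∧ x < τ x)) := by
            rintro (h1 | ⟨_, h1⟩)
            · omega
            · exact absurd h1 (not_lt.mpr hx.le)
          have h2 : (f (τ x) < f x ∨ (f (τ x) = f x ∧ τ x < x)) := Or.inr ⟨heq.symm, hx⟩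
          simp only [if_neg h1, if_pos h2, if_neg (not_lt.mpr heq.le),
            if_neg (not_lt.mpr heq.ge)]
          omega
      · have h1 : ¬(f x < f (τ x) ∨ (f x = f (τ x) ∧ x < τ x)) := by
          rintro (h1 | ⟨h1, _⟩) <;> omega
        have h2 : (f (τ x) < f x ∨ (f (τ x) = f x ∧ τ x < x)) := Or.inl hgt
        simp only [if_neg h1, if_pos h2, if_pos hgt, if_neg (not_lt.mpr hgt.le)]
        omega
  · intro x
    simp only [Finsupp.onFinset_apply, hD1]
    split_ifs <;> omega
  · intro x hx
    simp only [Finsupp.onFinset_apply, hD2, if_pos hx]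
  · intro x hx
    simp only [Finsupp.onFinset_apply, hD1, hD2]
    have hx2 : ¬ (x = τ x) := fun e => hx e.symm
    simp only [if_neg hx, hτ, if_neg hx2]
    rintro ⟨p1, p2⟩
    split_ifs at p1 p2 with h1 h2 <;> omega
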